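/- arXiv:1401.3059 — 3 statements merged into one kernel-verified Lean document; each statement's English description precedes it below -/
import Mathlib

section
/- Fix A⃗ ∈ ℝ_{>0}^p, masses m₁,...,m_n > 0, and a < -1/2, with 𝐀 invertible (k = 2p even). Then there exists C > 0 such that every relative equilibrium configuration Q₁,...,Q_n (pairwise distinct, satisfying 𝐀²Q_i = Σ_{j≠i} m_j(Q_i - Q_j)‖Q_i - Q_j‖^{2a}) satisfies ‖Q_i‖ < C for all i; hence the set of relative equilibrium configurations is bounded. -/
open Real Finset Matrix Filter

/-- The 2×2 rotation matrix of angle `t`. -/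
noncomputable def rot (t : ℝ) : Matrix (Fin 2) (Fin 2) ℝ :=
  !![Real.cos t, -Real.sin t; Real.sin t, Real.cos t]

/-- The k×k block-diagonal matrix with 2×2 rotation blocks `rot (θ s)`
(and a final diagonal entry 1 if `k` is odd). -/
noncomputable def Tk (k : ℕ) (θ : Fin (k / 2) → ℝ) : Matrix (Fin k) (Fin k) ℝ :=
  Matrix.of fun i j =>
    if h : (i : ℕ) / 2 = (j : ℕ) / 2 ∧ (i : ℕ) / 2 < k / 2 then
      rot (θ ⟨(i : ℕ) / 2, h.2⟩) ⟨(i : ℕ) % 2, Nat.mod_lt _ (by norm_num)⟩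
        ⟨(j : ℕ) % 2, Nat.mod_lt _ (by norm_num)⟩
    else if i = j then 1 else 0

/-- The diagonal matrix `diag (A₁, A₁, ..., A_p, A_p, [0])`. -/
noncomputable def Amat (k : ℕ) (A : Fin (k / 2) → ℝ) : Matrix (Fin k) (Fin k) ℝ :=
  Matrix.diagonal fun i => if h : (i : ℕ) / 2 < k / 2 then A ⟨(i : ℕ) / 2, h⟩ else 0

/-- Matrix action on Euclidean vectors. -/
noncomputable def mulVecE {k : ℕ} (M : Matrix (Fin k) (Fin k) ℝ)
    (x : EuclideanSpace ℝ (Fin k)) : EuclideanSpace ℝ (Fin k) :=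
  WithLp.toLp 2 (M.mulVec x)

/-!
For `a ≤ -1` the heart of the matter is a lower bound on mutual distances. Let `d` be the
distance of the closest pair `Q i₀, Q j₀`. Among the `n + 1` annuli
`Λ^t d < ‖x - Q i₀‖ ≤ Λ^(t+1) d` with `t ≤ n`, one contains no point; put `B = Λ^t d`. For the
cluster of points within `B` of `Q i₀`, the virial identity about its centre of mass has a left
side `O(‖𝐀²‖ B²)`, an interaction with the outside points `O(((Λ - 1) B)^(2a+1) B)`, and an
internal part at least `μ² d^(2a+2) ≥ μ² B^(2a+2)`, where `μ = minⱼ m_j` and `2a + 2 ≤ 0`.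
For `Λ` large this bounds `B`, hence `d ≥ B / Λⁿ`, from below. A distance bound `c` then gives
`‖𝐀² Q i‖ ≤ ∑ m_j c^(2a+1)`, and `𝐀²` is coercive as `k` is even.

For `-1 < a < -1/2` no distance bound is needed: the virial identity for the whole configuration
gives `λ μ R² ≤ 2^(2a+1) M² R^(2a+2)` for `R = maxᵢ ‖Q i‖`, `M = ∑ m_j` and `λ` the coercivity
constant of `𝐀²`; here `2a + 2 < 2`.
-/

open scoped RealInnerProductSpace

theorem exists_pos_forall_le {ι : Type*} [Finite ι] {f : ι → ℝ} (hf : ∀ i, 0 < f i) :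
    ∃ c > 0, ∀ i, c ≤ f i := by
  cases isEmpty_or_nonempty ι
  · exact ⟨1, one_pos, fun i => isEmptyElim i⟩
  · obtain ⟨i₀, hi₀⟩ := Finite.exists_min f
    exact ⟨f i₀, hf i₀, hi₀⟩

theorem exists_le_card_forall_notMem_Ioc {ι α : Type*} [Fintype ι] [Preorder α] (g : ι → α)
    {b : ℕ → α} (hb : Monotone b) :
    ∃ t ≤ Fintype.card ι, ∀ i, g i ∉ Set.Ioc (b t) (b (t + 1)) := by
  by_contra! h
  choose f hf using fun t : Fin (Fintype.card ι + 1) => h t (Nat.lt_succ_iff.mp t.isLt)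
  obtain ⟨t, t', hne, heq⟩ := Fintype.exists_ne_map_eq_of_card_lt f (by simp)
  wlog hlt : t < t' generalizing t t'
  · exact this t' t hne.symm heq.symm (lt_of_le_of_ne (not_lt.mp hlt) hne.symm)
  have h₁ := (hf t).2
  rw [heq] at h₁
  exact lt_irrefl _ (((hf t').1.trans_le h₁).trans_le (hb (Nat.succ_le_of_lt hlt)))

theorem add_le_sum_sum {ι : Type*} [DecidableEq ι] {s : Finset ι} {f : ι → ι → ℝ}
    (hf : ∀ i ∈ s, ∀ j ∈ s, 0 ≤ f i j) {i j : ι} (hi : i ∈ s) (hj : j ∈ s) (hij : i ≠ j) :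
    f i j + f j i ≤ ∑ x ∈ s, ∑ y ∈ s, f x y := by
  have hrow : ∀ x ∈ s, 0 ≤ ∑ y ∈ s, f x y := fun x hx => Finset.sum_nonneg (hf x hx)
  calc f i j + f j i ≤ ∑ y ∈ s, f i y + ∑ y ∈ s, f j y :=
        add_le_add (Finset.single_le_sum (hf i hi) hj) (Finset.single_le_sum (hf j hj) hi)
    _ = ∑ x ∈ {i, j}, ∑ y ∈ s, f x y :=
        (Finset.sum_pair (f := fun x => ∑ y ∈ s, f x y) hij).symm
    _ ≤ ∑ x ∈ s, ∑ y ∈ s, f x y :=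
        Finset.sum_le_sum_of_subset_of_nonneg (by simp [Finset.insert_subset_iff, hi, hj])
          fun x hx _ => hrow x hx

theorem sq_eq_rpow_mul_rpow_sub {R : ℝ} (hR : 0 < R) (b : ℝ) : R ^ 2 = R ^ b * R ^ (2 - b) := by
  rw [← Real.rpow_add hR, add_sub_cancel, Real.rpow_two]

theorem le_rpow_inv_of_mul_sq_le {R κ D b : ℝ} (hR : 0 ≤ R) (hκ : 0 < κ) (hD : 0 ≤ D)
    (hb : b < 2) (h : κ * R ^ 2 ≤ D * R ^ b) : R ≤ (D / κ) ^ (2 - b)⁻¹ := by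
  rcases hR.eq_or_lt with rfl | hR
  · positivity
  rw [le_rpow_inv_iff_of_pos hR.le (by positivity) (by linarith), le_div_iff₀ hκ]
  rw [sq_eq_rpow_mul_rpow_sub hR b, mul_left_comm] at h
  exact le_of_mul_le_mul_left (by linarith) (Real.rpow_pos_of_pos hR b)

theorem rpow_inv_le_of_mul_rpow_le_mul_sq {B κ D b : ℝ} (hB : 0 < B) (hκ : 0 < κ) (hD : 0 < D)
    (hb : b < 2) (h : κ * B ^ b ≤ D * B ^ 2) : (κ / D) ^ (2 - b)⁻¹ ≤ B := by
  rw [rpow_inv_le_iff_of_pos (by positivity) hB.le (by linarith), div_le_iff₀ hD]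
  rw [sq_eq_rpow_mul_rpow_sub hB b, mul_left_comm] at h
  exact le_of_mul_le_mul_left (by linarith) (Real.rpow_pos_of_pos hB b)

theorem rpow_mul_sq_eq_rpow_add_two {r e : ℝ} (hr : 0 ≤ r) (he : e + 2 ≠ 0) :
    r ^ e * r ^ 2 = r ^ (e + 2) := by
  rw [Real.rpow_add' hr he, Real.rpow_two]

section InnerProductSpace

variable {ι E : Type*} [NormedAddCommGroup E] [InnerProductSpace ℝ E]

theorem mul_norm_le_norm_of_mul_sq_le_inner {c : ℝ} {x y : E} (h : c * ‖x‖ ^ 2 ≤ ⟪y, x⟫) :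
    c * ‖x‖ ≤ ‖y‖ := by
  rcases (norm_nonneg x).eq_or_lt with hx | hx
  · rw [← hx, mul_zero]; exact norm_nonneg y
  refine le_of_mul_le_mul_right ?_ hx
  rw [mul_assoc, ← sq]
  exact h.trans (real_inner_le_norm y x)

theorem sum_sum_mul_inner_sub_eq_half (s : Finset ι) {w : ι → ι → ℝ}
    (hw : ∀ i j, w i j = w j i) (Q : ι → E) (p : E) :
    ∑ i ∈ s, ∑ j ∈ s, w i j * ⟪Q i - Q j, Q i - p⟫ =
      (∑ i ∈ s, ∑ j ∈ s, w i j * ‖Q i - Q j‖ ^ 2) / 2 := by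
  have hswap : ∑ i ∈ s, ∑ j ∈ s, w i j * ⟪Q i - Q j, Q i - p⟫ =
      -∑ i ∈ s, ∑ j ∈ s, w i j * ⟪Q i - Q j, Q j - p⟫ := by
    rw [Finset.sum_comm, ← Finset.sum_neg_distrib]
    refine Finset.sum_congr rfl fun i _ => ?_
    rw [← Finset.sum_neg_distrib]
    refine Finset.sum_congr rfl fun j _ => ?_
    rw [hw, ← neg_sub (Q i), inner_neg_left, mul_neg]
  have hsplit : ∀ i j, w i j * ‖Q i - Q j‖ ^ 2 =
      w i j * ⟪Q i - Q j, Q i - p⟫ - w i j * ⟪Q i - Q j, Q j - p⟫ := fun i j => by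
    rw [← mul_sub, ← inner_sub_right, sub_sub_sub_cancel_right, real_inner_self_eq_norm_sq]
  simp only [hsplit, Finset.sum_sub_distrib]
  linarith

theorem sum_smul_sub_centerMass_eq_zero {s : Finset ι} {w : ι → ℝ} (hw : ∑ i ∈ s, w i ≠ 0)
    (z : ι → E) : ∑ i ∈ s, w i • (z i - s.centerMass w z) = 0 := by
  simp only [smul_sub, Finset.sum_sub_distrib, ← Finset.sum_smul, Finset.centerMass]
  rw [smul_smul, mul_inv_cancel₀ hw, one_smul, sub_self]

theorem norm_sub_centerMass_le {s : Finset ι} {w : ι → ℝ} (hw₀ : ∀ i ∈ s, 0 ≤ w i)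
    (hw : 0 < ∑ i ∈ s, w i) {z : ι → E} {p : E} {r : ℝ} (hz : ∀ i ∈ s, ‖z i - p‖ ≤ r)
    {i : ι} (hi : i ∈ s) : ‖z i - s.centerMass w z‖ ≤ 2 * r := by
  have hc : s.centerMass w z ∈ Metric.closedBall p r :=
    (convex_closedBall p r).centerMass_mem hw₀ hw fun j hj => by
      simpa [dist_eq_norm] using hz j hj
  rw [Metric.mem_closedBall', dist_eq_norm] at hc
  calc ‖z i - s.centerMass w z‖ ≤ ‖z i - p‖ + ‖p - s.centerMass w z‖ :=
        norm_sub_le_norm_sub_add_norm_sub _ _ _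
    _ ≤ 2 * r := by linarith [hz i hi]

theorem sum_mul_inner_sub_centerMass_le (T : E →L[ℝ] E) {s : Finset ι} {w : ι → ℝ}
    (hw₀ : ∀ i ∈ s, 0 ≤ w i) (hw : 0 < ∑ i ∈ s, w i) {z : ι → E} {p : E} {r : ℝ}
    (hz : ∀ i ∈ s, ‖z i - p‖ ≤ r) :
    ∑ i ∈ s, w i * ⟪T (z i), z i - s.centerMass w z⟫ ≤ ‖T‖ * (∑ i ∈ s, w i) * (2 * r) ^ 2 := by
  set c := s.centerMass w z
  have hshift : ∑ i ∈ s, w i * ⟪T (z i), z i - c⟫ = ∑ i ∈ s, w i * ⟪T (z i - c), z i - c⟫ := by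
    have h0 : ⟪T c, ∑ i ∈ s, w i • (z i - c)⟫ = 0 := by
      rw [sum_smul_sub_centerMass_eq_zero hw.ne', inner_zero_right]
    simp only [map_sub, inner_sub_left, mul_sub, Finset.sum_sub_distrib]
    simp only [inner_sum, real_inner_smul_right] at h0
    rw [h0, sub_zero]
  rw [hshift, Finset.mul_sum, Finset.sum_mul]
  refine Finset.sum_le_sum fun i hi => ?_
  have hzc := norm_sub_centerMass_le hw₀ hw hz hi
  calc w i * ⟪T (z i - c), z i - c⟫ ≤ w i * (‖T‖ * ‖z i - c‖ * ‖z i - c‖) :=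
        mul_le_mul_of_nonneg_left ((real_inner_le_norm _ _).trans
          (mul_le_mul_of_nonneg_right (T.le_opNorm _) (norm_nonneg _))) (hw₀ i hi)
    _ = w i * (‖T‖ * ‖z i - c‖ ^ 2) := by ring
    _ ≤ w i * (‖T‖ * (2 * r) ^ 2) := by
        have := hw₀ i hi
        gcongr
    _ = ‖T‖ * w i * (2 * r) ^ 2 := by ring

theorem abs_sum_sum_compl_le [Fintype ι] [DecidableEq ι] {m : ι → ℝ} {a : ℝ} {Q : ι → E}
    (hm : ∀ i, 0 ≤ m i) (ha : a ≤ -1 / 2) {K : Finset ι} {p : E} {r s : ℝ}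
    (hr : ∀ i ∈ K, ‖Q i - p‖ ≤ r) (hr₀ : 0 ≤ r) (hs : 0 < s)
    (hsep : ∀ i ∈ K, ∀ j ∉ K, s ≤ ‖Q i - Q j‖) :
    |∑ i ∈ K, ∑ j ∈ Kᶜ, m i * m j * ‖Q i - Q j‖ ^ (2 * a) * ⟪Q i - Q j, Q i - p⟫| ≤
      (∑ i, m i) ^ 2 * (s ^ (2 * a + 1) * r) := by
  have hterm : ∀ i ∈ K, ∀ j ∈ Kᶜ,
      |m i * m j * ‖Q i - Q j‖ ^ (2 * a) * ⟪Q i - Q j, Q i - p⟫| ≤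
        m i * m j * (s ^ (2 * a + 1) * r) := by
    intro i hi j hj
    have hij := hsep i hi j (Finset.mem_compl.1 hj)
    have hm₂ := mul_nonneg (hm i) (hm j)
    rw [abs_mul, abs_of_nonneg (by positivity)]
    calc m i * m j * ‖Q i - Q j‖ ^ (2 * a) * |⟪Q i - Q j, Q i - p⟫|
        ≤ m i * m j * ‖Q i - Q j‖ ^ (2 * a) * (‖Q i - Q j‖ * r) := by
          gcongr
          exact (abs_real_inner_le_norm _ _).trans
            (mul_le_mul_of_nonneg_left (hr i hi) (norm_nonneg _))
      _ = m i * m j * (‖Q i - Q j‖ ^ (2 * a + 1) * r) := by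
          rw [Real.rpow_add_one (hs.trans_le hij).ne']; ring
      _ ≤ m i * m j * (s ^ (2 * a + 1) * r) :=
          mul_le_mul_of_nonneg_left (mul_le_mul_of_nonneg_right
            (Real.rpow_le_rpow_of_nonpos hs hij (by linarith)) hr₀) hm₂
  have hmass : ∀ t : Finset ι, ∑ i ∈ t, m i ≤ ∑ i, m i :=
    fun t => Finset.sum_le_univ_sum_of_nonneg hm
  refine (Finset.abs_sum_le_sum_abs _ _).trans ?_
  calc ∑ i ∈ K, |∑ j ∈ Kᶜ, m i * m j * ‖Q i - Q j‖ ^ (2 * a) * ⟪Q i - Q j, Q i - p⟫|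
      ≤ ∑ i ∈ K, ∑ j ∈ Kᶜ, m i * m j * (s ^ (2 * a + 1) * r) :=
        Finset.sum_le_sum fun i hi =>
          (Finset.abs_sum_le_sum_abs _ _).trans (Finset.sum_le_sum (hterm i hi))
    _ = (∑ i ∈ K, m i) * (∑ j ∈ Kᶜ, m j) * (s ^ (2 * a + 1) * r) := by
        rw [Finset.sum_mul_sum, Finset.sum_mul]
        simp only [Finset.sum_mul]
    _ ≤ (∑ i, m i) ^ 2 * (s ^ (2 * a + 1) * r) := by
        rw [sq]
        exact mul_le_mul_of_nonneg_right (mul_le_mul (hmass K) (hmass Kᶜ)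
          (Finset.sum_nonneg fun i _ => hm i) (Finset.sum_nonneg fun i _ => hm i)) (by positivity)

end InnerProductSpace

section Equilibrium

variable {ι E : Type*} [Fintype ι] [NormedAddCommGroup E] [InnerProductSpace ℝ E]

-- `T` plays the role of `𝐀²`. The term `j = i` vanishes, so this is the paper's sum over `j ≠ i`.
def IsRelEquilibrium (T : E →L[ℝ] E) (m : ι → ℝ) (a : ℝ) (Q : ι → E) : Prop :=
  ∀ i, T (Q i) = ∑ j, (m j * ‖Q i - Q j‖ ^ (2 * a)) • (Q i - Q j)

variable {T : E →L[ℝ] E} {m : ι → ℝ} {a : ℝ} {Q : ι → E}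

namespace IsRelEquilibrium

theorem mul_inner (hQ : IsRelEquilibrium T m a Q) (i : ι) (x : E) :
    m i * ⟪T (Q i), x⟫ = ∑ j, m i * m j * ‖Q i - Q j‖ ^ (2 * a) * ⟪Q i - Q j, x⟫ := by
  rw [hQ i, sum_inner, Finset.mul_sum]
  simp only [real_inner_smul_left, mul_assoc]

theorem virial [DecidableEq ι] (hQ : IsRelEquilibrium T m a Q) (s : Finset ι) (p : E) :
    ∑ i ∈ s, m i * ⟪T (Q i), Q i - p⟫ =
      (∑ i ∈ s, ∑ j ∈ s, m i * m j * ‖Q i - Q j‖ ^ (2 * a) * ‖Q i - Q j‖ ^ 2) / 2 +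
        ∑ i ∈ s, ∑ j ∈ sᶜ, m i * m j * ‖Q i - Q j‖ ^ (2 * a) * ⟪Q i - Q j, Q i - p⟫ := by
  simp only [hQ.mul_inner, ← Finset.sum_add_sum_compl s, Finset.sum_add_distrib]
  rw [sum_sum_mul_inner_sub_eq_half s fun i j => by rw [norm_sub_rev, mul_comm (m i)]]

theorem norm_le_of_forall_le_norm_sub (hQ : IsRelEquilibrium T m a Q) {c δ : ℝ} (hc : 0 < c)
    (hT : ∀ x, c * ‖x‖ ^ 2 ≤ ⟪T x, x⟫) (hm : ∀ i, 0 ≤ m i) (ha : a ≤ -1 / 2) (hδ : 0 < δ)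
    (hQδ : ∀ i j, i ≠ j → δ ≤ ‖Q i - Q j‖) (i : ι) :
    ‖Q i‖ ≤ (∑ j, m j) * δ ^ (2 * a + 1) / c := by
  have hterm : ∀ j, ‖(m j * ‖Q i - Q j‖ ^ (2 * a)) • (Q i - Q j)‖ ≤ m j * δ ^ (2 * a + 1) := by
    intro j
    rcases eq_or_ne i j with rfl | hij
    · simpa using mul_nonneg (hm i) (Real.rpow_nonneg hδ.le _)
    have hδij := hQδ i j hij
    rw [norm_smul, Real.norm_of_nonneg (by have := hm j; positivity), mul_assoc,
      ← Real.rpow_add_one (hδ.trans_le hδij).ne']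
    exact mul_le_mul_of_nonneg_left (Real.rpow_le_rpow_of_nonpos hδ hδij (by linarith)) (hm j)
  have hTQ : ‖T (Q i)‖ ≤ (∑ j, m j) * δ ^ (2 * a + 1) := by
    rw [hQ i, Finset.sum_mul]
    exact (norm_sum_le _ _).trans (Finset.sum_le_sum fun j _ => hterm j)
  rw [le_div_iff₀ hc, mul_comm]
  exact (mul_norm_le_norm_of_mul_sq_le_inner (hT (Q i))).trans hTQ

theorem pair_le_of_isolated [DecidableEq ι] (hQ : IsRelEquilibrium T m a Q) (hm : ∀ i, 0 < m i)
    (ha : a ≤ -1 / 2) {K : Finset ι} {i₀ j₀ : ι} (hi₀ : i₀ ∈ K) (hj₀ : j₀ ∈ K) (hij : i₀ ≠ j₀)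
    {p : E} {B s : ℝ} (hB : ∀ i ∈ K, ‖Q i - p‖ ≤ B) (hs : 0 < s)
    (hsep : ∀ i ∈ K, ∀ j ∉ K, s ≤ ‖Q i - Q j‖) :
    m i₀ * m j₀ * ‖Q i₀ - Q j₀‖ ^ (2 * a) * ‖Q i₀ - Q j₀‖ ^ 2 ≤
      4 * ‖T‖ * (∑ i, m i) * B ^ 2 + 2 * (∑ i, m i) ^ 2 * (s ^ (2 * a + 1) * B) := by
  have hB₀ : 0 ≤ B := (norm_nonneg _).trans (hB i₀ hi₀)
  have hmK : 0 < ∑ i ∈ K, m i := Finset.sum_pos (fun i _ => hm i) ⟨i₀, hi₀⟩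
  set c := K.centerMass m Q
  have hvir := hQ.virial K c
  have hcB : ∀ i ∈ K, ‖Q i - c‖ ≤ 2 * B := fun i hi =>
    norm_sub_centerMass_le (fun i _ => (hm i).le) hmK hB hi
  have hlhs : ∑ i ∈ K, m i * ⟪T (Q i), Q i - c⟫ ≤ 4 * ‖T‖ * (∑ i, m i) * B ^ 2 :=
    calc ∑ i ∈ K, m i * ⟪T (Q i), Q i - c⟫ ≤ ‖T‖ * (∑ i ∈ K, m i) * (2 * B) ^ 2 :=
          sum_mul_inner_sub_centerMass_le T (fun i _ => (hm i).le) hmK hB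
      _ ≤ ‖T‖ * (∑ i, m i) * (2 * B) ^ 2 :=
          mul_le_mul_of_nonneg_right (mul_le_mul_of_nonneg_left
            (Finset.sum_le_univ_sum_of_nonneg fun i => (hm i).le) (norm_nonneg T)) (sq_nonneg _)
      _ = 4 * ‖T‖ * (∑ i, m i) * B ^ 2 := by ring
  have hinternal : 2 * (m i₀ * m j₀ * ‖Q i₀ - Q j₀‖ ^ (2 * a) * ‖Q i₀ - Q j₀‖ ^ 2) ≤
      ∑ i ∈ K, ∑ j ∈ K, m i * m j * ‖Q i - Q j‖ ^ (2 * a) * ‖Q i - Q j‖ ^ 2 := by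
    refine le_of_eq_of_le ?_ (add_le_sum_sum (fun i _ j _ => ?_) hi₀ hj₀ hij)
    · rw [norm_sub_rev (Q j₀), mul_comm (m j₀)]; ring
    · have := hm i; have := hm j; positivity
  have hexternal := abs_sum_sum_compl_le (fun i => (hm i).le) ha hcB (by linarith) hs hsep
  linarith [neg_abs_le (∑ i ∈ K, ∑ j ∈ Kᶜ,
    m i * m j * ‖Q i - Q j‖ ^ (2 * a) * ⟪Q i - Q j, Q i - c⟫)]

end IsRelEquilibrium

theorem exists_forall_norm_le_of_neg_one_lt {c : ℝ} (hc : 0 < c)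
    (hT : ∀ x, c * ‖x‖ ^ 2 ≤ ⟪T x, x⟫) (hm : ∀ i, 0 < m i) (ha₁ : -1 < a) (ha₀ : a < 0) :
    ∃ C, ∀ Q : ι → E, IsRelEquilibrium T m a Q → ∀ i, ‖Q i‖ ≤ C := by
  classical
  obtain ⟨μ, hμ, hμm⟩ := exists_pos_forall_le hm
  set M := ∑ i, m i
  refine ⟨(2 ^ (2 * a + 1) * M ^ 2 / (c * μ)) ^ (2 - (2 * a + 2))⁻¹, fun Q hQ i => ?_⟩
  have : Nonempty ι := ⟨i⟩
  obtain ⟨i₁, hi₁⟩ := Finite.exists_max fun i => ‖Q i‖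
  set R := ‖Q i₁‖
  refine (hi₁ i).trans (le_rpow_inv_of_mul_sq_le (norm_nonneg _) (by positivity)
    (by positivity) (by linarith) ?_)
  have hsum : ∀ i, 0 ≤ m i * ⟪T (Q i), Q i⟫ := fun i =>
    mul_nonneg (hm i).le ((by positivity : 0 ≤ c * ‖Q i‖ ^ 2).trans (hT _))
  have hlow : c * μ * R ^ 2 ≤ ∑ i, m i * ⟪T (Q i), Q i⟫ :=
    calc c * μ * R ^ 2 = μ * (c * R ^ 2) := by ring
      _ ≤ m i₁ * ⟪T (Q i₁), Q i₁⟫ :=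
          mul_le_mul (hμm i₁) (hT _) (by positivity) (hm i₁).le
      _ ≤ ∑ i, m i * ⟪T (Q i), Q i⟫ :=
          Finset.single_le_sum (fun i _ => hsum i) (Finset.mem_univ i₁)
  have hpair : ∀ i j, ‖Q i - Q j‖ ^ (2 * a) * ‖Q i - Q j‖ ^ 2 ≤ (2 * R) ^ (2 * a + 2) := by
    intro i j
    rw [rpow_mul_sq_eq_rpow_add_two (norm_nonneg _) (by linarith)]
    exact Real.rpow_le_rpow (norm_nonneg _)
      ((norm_sub_le _ _).trans (by linarith [hi₁ i, hi₁ j])) (by linarith)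
  have hup : ∑ i, ∑ j, m i * m j * ‖Q i - Q j‖ ^ (2 * a) * ‖Q i - Q j‖ ^ 2 ≤
      M ^ 2 * (2 * R) ^ (2 * a + 2) := by
    rw [sq, Finset.sum_mul_sum, Finset.sum_mul]
    refine Finset.sum_le_sum fun i _ => ?_
    rw [Finset.sum_mul]
    refine Finset.sum_le_sum fun j _ => ?_
    rw [mul_assoc]
    exact mul_le_mul_of_nonneg_left (hpair i j) (mul_nonneg (hm i).le (hm j).le)
  have h2R : (2 * R) ^ (2 * a + 2) = 2 * (2 ^ (2 * a + 1) * R ^ (2 * a + 2)) := by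
    rw [Real.mul_rpow zero_le_two (norm_nonneg _), show 2 * a + 2 = 2 * a + 1 + 1 by ring,
      Real.rpow_add_one two_ne_zero]
    ring
  have hvir := hQ.virial Finset.univ 0
  simp only [sub_zero, Finset.compl_univ, Finset.sum_empty, Finset.sum_const_zero,
    add_zero] at hvir
  rw [h2R] at hup
  linarith

theorem exists_forall_le_of_gap [Nonempty ι] (hm : ∀ i, 0 < m i) (ha : a ≤ -1) :
    ∃ Λ ≥ (1 : ℝ), ∃ δ > (0 : ℝ), ∀ Q : ι → E, IsRelEquilibrium T m a Q →
      ∀ i₀ j₀, 0 < ‖Q i₀ - Q j₀‖ → ∀ B, ‖Q i₀ - Q j₀‖ ≤ B →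
        (∀ l, ‖Q l - Q i₀‖ ∉ Set.Ioc B (Λ * B)) → δ ≤ B := by
  classical
  obtain ⟨μ, hμ, hμm⟩ := exists_pos_forall_le hm
  set M := ∑ i, m i
  have hM : 0 < M := Finset.sum_pos (fun i _ => hm i) Finset.univ_nonempty
  -- `Λ` makes the interaction across the gap at most half of the closest pair's `μ² B^(2a+2)`.
  set Λ := 1 + (μ ^ 2 / (4 * M ^ 2)) ^ (2 * a + 1)⁻¹
  have hΛ : (Λ - 1) ^ (2 * a + 1) = μ ^ 2 / (4 * M ^ 2) := by
    rw [add_sub_cancel_left, Real.rpow_inv_rpow (by positivity) (by linarith)]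
  have hΛ₁ : 0 < Λ - 1 := by rw [add_sub_cancel_left]; positivity
  refine ⟨Λ, by linarith, (μ ^ 2 / 2 / (4 * (‖T‖ + 1) * M)) ^ (2 - (2 * a + 2))⁻¹,
    by positivity, fun Q hQ i₀ j₀ hd B hdB hgap => ?_⟩
  set d := ‖Q i₀ - Q j₀‖
  have hB : 0 < B := hd.trans_le hdB
  set K := Finset.univ.filter fun l => ‖Q l - Q i₀‖ ≤ B
  have hK : ∀ l ∈ K, ‖Q l - Q i₀‖ ≤ B := fun l hl => (Finset.mem_filter.1 hl).2
  have hsep : ∀ l ∈ K, ∀ l' ∉ K, (Λ - 1) * B ≤ ‖Q l - Q l'‖ := by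
    intro l hl l' hl'
    have hfar : Λ * B < ‖Q l' - Q i₀‖ := by
      have := hgap l'
      simp only [K, Finset.mem_filter, Finset.mem_univ, true_and, not_le] at hl'
      simp only [Set.mem_Ioc, not_and, not_le] at this
      exact this hl'
    have := norm_sub_le_norm_sub_add_norm_sub (Q l') (Q l) (Q i₀)
    rw [norm_sub_rev (Q l') (Q l)] at this
    linarith [hK l hl]
  have hij : i₀ ≠ j₀ := by rintro rfl; simp [d] at hd
  have hpair := hQ.pair_le_of_isolated hm (by linarith) (by simpa [K] using hB.le)
    (by simpa [K, norm_sub_rev] using hdB) hij hK (mul_pos hΛ₁ hB) hsep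
  have hlow : μ ^ 2 * B ^ (2 * a + 2) ≤ m i₀ * m j₀ * d ^ (2 * a) * d ^ 2 := by
    rw [mul_assoc, ← Real.rpow_two d, ← Real.rpow_add hd, sq]
    exact mul_le_mul (mul_le_mul (hμm i₀) (hμm j₀) hμ.le (hm i₀).le)
      (Real.rpow_le_rpow_of_nonpos hd hdB (by linarith)) (by positivity)
      (mul_nonneg (hm i₀).le (hm j₀).le)
  have hext : 2 * M ^ 2 * (((Λ - 1) * B) ^ (2 * a + 1) * B) = μ ^ 2 / 2 * B ^ (2 * a + 2) := by
    rw [Real.mul_rpow hΛ₁.le hB.le, hΛ, mul_assoc _ (B ^ (2 * a + 1)),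
      ← Real.rpow_add_one hB.ne', show 2 * a + 1 + 1 = 2 * a + 2 by ring]
    field_simp
    ring
  refine rpow_inv_le_of_mul_rpow_le_mul_sq hB (by positivity) (by positivity) (by linarith) ?_
  have : 0 ≤ 4 * M * B ^ 2 := by positivity
  nlinarith

theorem exists_pos_forall_le_norm_sub (hm : ∀ i, 0 < m i) (ha : a ≤ -1) :
    ∃ δ > 0, ∀ Q : ι → E, Function.Injective Q → IsRelEquilibrium T m a Q →
      ∀ i j, i ≠ j → δ ≤ ‖Q i - Q j‖ := by
  classical
  cases isEmpty_or_nonempty ι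
  · exact ⟨1, one_pos, fun Q _ _ i => isEmptyElim i⟩
  obtain ⟨Λ, hΛ, δ, hδ, hgap⟩ := exists_forall_le_of_gap (T := T) (E := E) hm ha
  refine ⟨δ / Λ ^ Fintype.card ι, by positivity, fun Q hinj hQ i j hij => ?_⟩
  obtain ⟨⟨i₀, j₀⟩, h₀, hmin⟩ := Finset.univ.offDiag.exists_min_image
    (fun q : ι × ι => ‖Q q.1 - Q q.2‖) ⟨(i, j), by simpa using hij⟩
  set d := ‖Q i₀ - Q j₀‖
  have hd : 0 < d := norm_pos_iff.2 (sub_ne_zero.2 (hinj.ne (by simpa using h₀)))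
  obtain ⟨t, ht, hgap_t⟩ := exists_le_card_forall_notMem_Ioc (fun l => ‖Q l - Q i₀‖)
    (b := fun t => Λ ^ t * d) fun s t hst =>
      mul_le_mul_of_nonneg_right (pow_le_pow_right₀ hΛ hst) hd.le
  have hB := hgap Q hQ i₀ j₀ hd (Λ ^ t * d) (le_mul_of_one_le_left hd.le (one_le_pow₀ hΛ))
    fun l => by simpa [pow_succ', mul_assoc] using hgap_t l
  calc δ / Λ ^ Fintype.card ι ≤ Λ ^ t * d / Λ ^ t :=
        div_le_div₀ (by positivity) hB (by positivity) (pow_le_pow_right₀ hΛ ht)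
    _ = d := by field_simp
    _ ≤ ‖Q i - Q j‖ := hmin (i, j) (by simpa using hij)

theorem exists_forall_norm_le {c : ℝ} (hc : 0 < c) (hT : ∀ x, c * ‖x‖ ^ 2 ≤ ⟪T x, x⟫)
    (hm : ∀ i, 0 < m i) (ha : a < -1 / 2) :
    ∃ C, ∀ Q : ι → E, Function.Injective Q → IsRelEquilibrium T m a Q → ∀ i, ‖Q i‖ ≤ C := by
  rcases le_or_gt a (-1) with ha₁ | ha₁
  · obtain ⟨δ, hδ, hQδ⟩ := exists_pos_forall_le_norm_sub (T := T) hm ha₁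
    exact ⟨(∑ j, m j) * δ ^ (2 * a + 1) / c, fun Q hinj hQ =>
      hQ.norm_le_of_forall_le_norm_sub hc hT (fun i => (hm i).le) ha.le hδ (hQδ Q hinj hQ)⟩
  · obtain ⟨C, hC⟩ := exists_forall_norm_le_of_neg_one_lt hc hT hm ha₁ (by linarith)
    exact ⟨C, fun Q _ hQ => hC Q hQ⟩

end Equilibrium

theorem le_inner_toEuclideanCLM_diagonal_self {n : Type*} [Fintype n] [DecidableEq n]
    {d : n → ℝ} {c : ℝ} (h : ∀ i, c ≤ d i) (x : EuclideanSpace ℝ n) :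
    c * ‖x‖ ^ 2 ≤ ⟪Matrix.toEuclideanCLM (𝕜 := ℝ) (Matrix.diagonal d) x, x⟫ := by
  rw [real_inner_comm, Matrix.inner_toEuclideanCLM, EuclideanSpace.real_norm_sq_eq,
    Finset.mul_sum]
  simp only [dotProduct, Matrix.mulVec_diagonal]
  refine Finset.sum_le_sum fun i _ => ?_
  nlinarith [mul_le_mul_of_nonneg_right (h i) (sq_nonneg (x i))]

theorem Fin.div_two_lt_of_even {k : ℕ} (hk : Even k) (i : Fin k) : (i : ℕ) / 2 < k / 2 := by
  obtain ⟨r, rfl⟩ := hk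
  omega

theorem Amat_sq_eq_diagonal {k : ℕ} (hk : Even k) (A : Fin (k / 2) → ℝ) :
    Amat k A ^ 2 =
      Matrix.diagonal fun i : Fin k => A ⟨(i : ℕ) / 2, Fin.div_two_lt_of_even hk i⟩ ^ 2 := by
  rw [Amat, Matrix.diagonal_pow]
  congr 1
  funext i
  rw [Pi.pow_apply, dif_pos (Fin.div_two_lt_of_even hk i)]

theorem exists_pos_le_inner_Amat_sq {k : ℕ} (hk : Even k) {A : Fin (k / 2) → ℝ}
    (hA : ∀ s, 0 < A s) :
    ∃ c > 0, ∀ x, c * ‖x‖ ^ 2 ≤ ⟪Matrix.toEuclideanCLM (𝕜 := ℝ) (Amat k A ^ 2) x, x⟫ := by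
  obtain ⟨c, hc, hcA⟩ := exists_pos_forall_le fun s => pow_pos (hA s) 2
  exact ⟨c, hc, fun x => by
    rw [Amat_sq_eq_diagonal hk]
    exact le_inner_toEuclideanCLM_diagonal_self (fun i => hcA _) x⟩

theorem main_upper_bound_general {k n : ℕ} (hk : Even k) (A : Fin (k / 2) → ℝ)
    (hA : ∀ s, 0 < A s) (m : Fin n → ℝ) (hm : ∀ i, 0 < m i) (a : ℝ) (ha : a < -1/2) :
    ∃ C > (0 : ℝ), ∀ Q : Fin n → EuclideanSpace ℝ (Fin k),
      (∀ i j, i ≠ j → Q i ≠ Q j) →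
      (∀ i, mulVecE ((Amat k A) ^ 2) (Q i) =
        ∑ j ∈ Finset.univ.filter (· ≠ i), (m j * ‖Q i - Q j‖ ^ (2 * a)) • (Q i - Q j)) →
      ∀ i, ‖Q i‖ < C := by
  obtain ⟨c, hc, hcoercive⟩ := exists_pos_le_inner_Amat_sq hk hA
  obtain ⟨C, hC⟩ := exists_forall_norm_le hc hcoercive hm ha
  refine ⟨|C| + 1, by positivity, fun Q hne hQ i => ?_⟩
  have hrel : IsRelEquilibrium (Matrix.toEuclideanCLM (𝕜 := ℝ) (Amat k A ^ 2)) m a Q := by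
    intro l
    rw [← Finset.sum_filter_of_ne (p := (· ≠ l)) fun j _ h => ?_]
    · exact hQ l
    · rintro rfl
      simp at h
  have hinj : Function.Injective Q := fun i j h => by_contra fun hij => hne i j hij h
  linarith [hC Q hinj hrel i, le_abs_self C]

/-- Corollary: with `k` even (so `𝐀` invertible), relative equilibrium
configurations are uniformly bounded. -/
theorem main_upper_bound {k n : ℕ} (hk : Even k) (hn : 3 ≤ n) (A : Fin (k / 2) → ℝ)
    (hA : ∀ s, 0 < A s) (m : Fin n → ℝ) (hm : ∀ i, 0 < m i) (a : ℝ) (ha : a < -1/2) :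
    ∃ C > (0 : ℝ), ∀ Q : Fin n → EuclideanSpace ℝ (Fin k),
      (∀ i j, i ≠ j → Q i ≠ Q j) →
      (∀ i, mulVecE ((Amat k A) ^ 2) (Q i) =
        ∑ j ∈ Finset.univ.filter (· ≠ i), (m j * ‖Q i - Q j‖ ^ (2 * a)) • (Q i - Q j)) →
      ∀ i, ‖Q i‖ < C :=
  main_upper_bound_general hk A hA m hm a ha
end

section
/- Suppose a < -1/2 and for sequences of configurations Q_{1r},...,Q_{lr} all mutual distances ‖Q_{ir} - Q_{jr}‖ → 0 as r → ∞, with ‖Q_{1r} - Q_{lr}‖ maximal among these distances for each r. If the Q_{ir} additionally satisfy the relative equilibrium criterion with fixed masses m_i > 0 and fixed 𝐀, and the distances to the remaining bodies Q_{(l+1)r},...,Q_{nr} stay bounded below, then the inner product of both sides of the identity 𝐀²Σ_{i=2}^l m_i(Q_{1r} - Q_{ir}) = (Σ_{i=1}^l m_i)Σ_{j=2}^l m_j(Q_{1r}-Q_{jr})‖Q_{1r}-Q_{jr}‖^{2a} + Σ_{i=2}^l m_i(R_{1l,r}-R_{il,r}) with the unit vector (Q_{1r}-Q_{lr})/‖Q_{1r}-Q_{lr}‖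 yields a contradiction: the left side is bounded while the right side tends to +∞. -/
/-!
Weight the equilibrium equations of the cluster bodies by their masses and sum them: the mutual
attractions inside the cluster cancel (Newton's third law), leaving
`A² Σᵢ mᵢ (Q₁ - Qᵢ) = (Σᵢ mᵢ) Σⱼ mⱼ ‖Q₁ - Qⱼ‖^{2a} (Q₁ - Qⱼ) + Σᵢ mᵢ (R₁ - Rᵢ)`,
where `Rᵢ` is the attraction of the bodies outside the cluster. With `τ = ‖Q₁ - Q_l‖` the cluster
diameter, the left side is `O(τ)` and the `Rᵢ` are bounded. In the direction of `Q₁ - Q_l` no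
cluster term points backwards (the diameter bound keeps every angle at most `π/2`), and the term
`j = l` alone has size `m_l τ^{2a+1}`. So `m_l τ^{2a+1} ≤ ‖A²‖ τ + 2B`, with `B` a bound for the
`Rᵢ`, which fails as `τ → 0` because `2a + 1 < 0`.
-/

open Real Finset Matrix Filter

open Topology
open scoped RealInnerProductSpace NNReal

lemma not_forall_mul_rpow_le {α : Type*} {l : Filter α} [l.NeBot] {τ : α → ℝ}
    (hτ : Tendsto τ l (𝓝[>] 0)) {p : ℝ} (hp : p < 0) {c : ℝ} (hc : 0 < c)
    (K B : ℝ) : ¬ ∀ x, c * τ x ^ p ≤ K * τ x + B := by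
  intro h
  have hlhs : Tendsto (fun x => c * τ x ^ p) l atTop :=
    ((tendsto_rpow_neg_nhdsGT_zero hp).comp hτ).const_mul_atTop hc
  have hrhs : Tendsto (fun x => K * τ x + B) l (𝓝 (K * 0 + B)) :=
    ((tendsto_nhdsWithin_iff.mp hτ).1.const_mul K).add_const B
  obtain ⟨x, hbig, hsmall⟩ := ((hlhs.eventually_gt_atTop (K * 0 + B + 1)).and
    (hrhs.eventually_lt_const (lt_add_one _))).exists
  linarith [h x]

lemma Finset.sum_Icc_consecutive {M : Type*} [AddCommMonoid M] (f : ℕ → M) {a b c : ℕ}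
    (hab : a ≤ b + 1) (hbc : b ≤ c) :
    ∑ i ∈ Icc a b, f i + ∑ i ∈ Icc (b + 1) c, f i = ∑ i ∈ Icc a c, f i := by
  rw [← Finset.sum_union]
  · congr 1; ext; simp only [mem_union, mem_Icc]; omega
  · rw [Finset.disjoint_left]; intro; simp only [mem_Icc]; omega

section PairForce

variable {ι E : Type*} [NormedAddCommGroup E] [InnerProductSpace ℝ E]

noncomputable def pairForce (m : ι → ℝ) (a : ℝ) (Q : ι → E) (i j : ι) : E :=
  (m j * ‖Q i - Q j‖ ^ (2 * a)) • (Q i - Q j)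

variable (m : ι → ℝ) (a : ℝ) (Q : ι → E)

@[simp]
lemma pairForce_self (i : ι) : pairForce m a Q i i = 0 := by
  simp [pairForce]

lemma smul_pairForce_swap (i j : ι) :
    m j • pairForce m a Q j i = -(m i • pairForce m a Q i j) := by
  simp only [pairForce, smul_smul, norm_sub_rev (Q j), ← smul_neg, neg_sub]
  ring_nf

lemma sum_sum_smul_pairForce_eq_zero (s : Finset ι) :
    ∑ i ∈ s, ∑ j ∈ s, m i • pairForce m a Q i j = 0 := by
  have := IsAddTorsionFree.of_isTorsionFree ℝ E
  refine self_eq_neg.mp ?_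
  calc ∑ i ∈ s, ∑ j ∈ s, m i • pairForce m a Q i j
      = ∑ i ∈ s, ∑ j ∈ s, m j • pairForce m a Q j i := Finset.sum_comm
    _ = -∑ i ∈ s, ∑ j ∈ s, m i • pairForce m a Q i j := by
      rw [← Finset.sum_neg_distrib]
      exact Finset.sum_congr rfl fun i _ => by
        rw [← Finset.sum_neg_distrib]
        exact Finset.sum_congr rfl fun j _ => smul_pairForce_swap m a Q i j

lemma sum_smul_sub_eq_of_eq_sum_pairForce (s : Finset ι) (f R : ι → E)
    (hf : ∀ i ∈ s, f i = ∑ j ∈ s, pairForce m a Q i j + R i) {i₀ : ι} (hi₀ : i₀ ∈ s) :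
    ∑ i ∈ s, m i • (f i₀ - f i) =
      (∑ i ∈ s, m i) • ∑ j ∈ s, pairForce m a Q i₀ j + ∑ i ∈ s, m i • (R i₀ - R i) := by
  have hsplit : ∀ i ∈ s, m i • (f i₀ - f i) = m i • (∑ j ∈ s, pairForce m a Q i₀ j) +
      m i • (R i₀ - R i) - ∑ j ∈ s, m i • pairForce m a Q i j := by
    intro i hi
    rw [hf i hi, hf i₀ hi₀, ← Finset.smul_sum]
    module
  rw [Finset.sum_congr rfl hsplit, Finset.sum_sub_distrib, Finset.sum_add_distrib,
    sum_sum_smul_pairForce_eq_zero, sub_zero, Finset.sum_smul]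

lemma inner_sub_sub_nonneg_of_norm_le {x y z : E} (h : ‖z - y‖ ≤ ‖x - y‖) :
    0 ≤ ⟪x - z, x - y⟫ := by
  rw [norm_sub_rev] at h
  have hCS := abs_real_inner_le_norm (y - z) (x - y)
  calc (0 : ℝ) ≤ ‖x - y‖ * ‖x - y‖ - ‖y - z‖ * ‖x - y‖ := by nlinarith [norm_nonneg (x - y)]
    _ ≤ ⟪x - y, x - y⟫ + ⟪y - z, x - y⟫ := by
      rw [real_inner_self_eq_norm_mul_norm]; linarith [(abs_le.mp hCS).1]
    _ = ⟪x - z, x - y⟫ := by rw [← inner_add_left, sub_add_sub_cancel]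

lemma mul_rpow_le_norm_sum_pairForce (s : Finset ι) (hm : ∀ j ∈ s, 0 ≤ m j) {i l : ι}
    (hl : l ∈ s) (hne : Q i ≠ Q l) (hmax : ∀ j ∈ s, ‖Q j - Q l‖ ≤ ‖Q i - Q l‖) :
    m l * ‖Q i - Q l‖ ^ (2 * a + 1) ≤ ‖∑ j ∈ s, pairForce m a Q i j‖ := by
  set τ := ‖Q i - Q l‖
  have hτ : 0 < τ := norm_pos_iff.mpr (sub_ne_zero.mpr hne)
  have hterm : ∀ j ∈ s, 0 ≤ ⟪pairForce m a Q i j, Q i - Q l⟫ := fun j hj => by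
    rw [pairForce, real_inner_smul_left]
    exact mul_nonneg (mul_nonneg (hm j hj) (by positivity))
      (inner_sub_sub_nonneg_of_norm_le (hmax j hj))
  have hlterm : ⟪pairForce m a Q i l, Q i - Q l⟫ = m l * τ ^ (2 * a + 1) * τ := by
    rw [pairForce, real_inner_smul_left, real_inner_self_eq_norm_mul_norm, rpow_add_one hτ.ne']
    ring
  refine le_of_mul_le_mul_right ?_ hτ
  calc m l * τ ^ (2 * a + 1) * τ
      ≤ ∑ j ∈ s, ⟪pairForce m a Q i j, Q i - Q l⟫ := hlterm ▸ Finset.single_le_sum hterm hl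
    _ = ⟪∑ j ∈ s, pairForce m a Q i j, Q i - Q l⟫ := (sum_inner _ _ _).symm
    _ ≤ ‖∑ j ∈ s, pairForce m a Q i j‖ * τ := real_inner_le_norm _ _

lemma norm_sum_pairForce_le_of_le_norm (t : Finset ι) (hm : ∀ j ∈ t, 0 ≤ m j)
    (ha : 2 * a + 1 ≤ 0) {δ : ℝ} (hδ : 0 < δ) {i : ι} (hfar : ∀ j ∈ t, δ ≤ ‖Q i - Q j‖) :
    ‖∑ j ∈ t, pairForce m a Q i j‖ ≤ ∑ j ∈ t, m j * δ ^ (2 * a + 1) := by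
  refine (norm_sum_le _ _).trans (Finset.sum_le_sum fun j hj => ?_)
  have hdist : 0 < ‖Q i - Q j‖ := hδ.trans_le (hfar j hj)
  rw [pairForce, norm_smul, Real.norm_of_nonneg (by have := hm j hj; positivity), mul_assoc,
    ← rpow_add_one hdist.ne']
  exact mul_le_mul_of_nonneg_left (rpow_le_rpow_of_nonpos hδ (hfar j hj) ha) (hm j hj)

lemma norm_sum_smul_le (s : Finset ι) (v : ι → E) (hm : ∀ i ∈ s, 0 ≤ m i) {C : ℝ}
    (hv : ∀ i ∈ s, ‖v i‖ ≤ C) : ‖∑ i ∈ s, m i • v i‖ ≤ (∑ i ∈ s, m i) * C := by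
  rw [Finset.sum_mul]
  refine (norm_sum_le _ _).trans (Finset.sum_le_sum fun i hi => ?_)
  rw [norm_smul, Real.norm_of_nonneg (hm i hi)]
  exact mul_le_mul_of_nonneg_left (hv i hi) (hm i hi)

lemma norm_sum_pairForce_le_of_lipschitz (s : Finset ι) (hm : ∀ i ∈ s, 0 < m i)
    {L : E → E} {K : ℝ≥0} (hL : LipschitzWith K L) (R : ι → E)
    (hcrit : ∀ i ∈ s, L (Q i) = ∑ j ∈ s, pairForce m a Q i j + R i)
    {i₀ : ι} (hi₀ : i₀ ∈ s) {τ B : ℝ} (hτ : ∀ i ∈ s, ‖Q i₀ - Q i‖ ≤ τ)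
    (hR : ∀ i ∈ s, ‖R i‖ ≤ B) :
    ‖∑ j ∈ s, pairForce m a Q i₀ j‖ ≤ K * τ + 2 * B := by
  have hm₀ : ∀ i ∈ s, 0 ≤ m i := fun i hi => (hm i hi).le
  have hM : 0 < ∑ i ∈ s, m i := Finset.sum_pos hm ⟨i₀, hi₀⟩
  have hid := sum_smul_sub_eq_of_eq_sum_pairForce m a Q s (L ∘ Q) R hcrit hi₀
  refine le_of_mul_le_mul_left ?_ hM
  calc (∑ i ∈ s, m i) * ‖∑ j ∈ s, pairForce m a Q i₀ j‖
      = ‖∑ i ∈ s, m i • (L (Q i₀) - L (Q i)) - ∑ i ∈ s, m i • (R i₀ - R i)‖ := by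
        rw [Function.comp_def] at hid
        rw [hid, add_sub_cancel_right, norm_smul, Real.norm_of_nonneg hM.le]
    _ ≤ (∑ i ∈ s, m i) * (K * τ) + (∑ i ∈ s, m i) * (2 * B) := by
      refine (norm_sub_le _ _).trans (add_le_add ?_ ?_)
      · refine norm_sum_smul_le m s _ hm₀ fun i hi => ?_
        exact (hL.norm_sub_le _ _).trans (mul_le_mul_of_nonneg_left (hτ i hi) K.2)
      · refine norm_sum_smul_le m s _ hm₀ fun i hi => ?_
        exact (norm_sub_le _ _).trans (by linarith [hR i hi, hR i₀ hi₀])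
    _ = (∑ i ∈ s, m i) * (K * τ + 2 * B) := by ring

end PairForce

lemma mul_rpow_le_of_forall_eq_sum_pairForce {E : Type*} [NormedAddCommGroup E]
    [InnerProductSpace ℝ E] (L : E →L[ℝ] E) {m : ℕ → ℝ} {a : ℝ} (ha : 2 * a + 1 ≤ 0) {l n : ℕ}
    (hl : 2 ≤ l) (hln : l ≤ n) {Q : ℕ → E} (hm : ∀ i ∈ Icc 1 n, 0 < m i) (hne : Q 1 ≠ Q l)
    (hcrit : ∀ i ∈ Icc 1 n, L (Q i) = ∑ j ∈ (Icc 1 n).erase i, pairForce m a Q i j)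
    (hmax : ∀ i ∈ Icc 1 l, ∀ j ∈ Icc 1 l, ‖Q i - Q j‖ ≤ ‖Q 1 - Q l‖) {δ : ℝ} (hδ : 0 < δ)
    (hfar : ∀ i ∈ Icc 1 l, ∀ j ∈ Icc (l + 1) n, δ ≤ ‖Q i - Q j‖) :
    m l * ‖Q 1 - Q l‖ ^ (2 * a + 1) ≤
      ‖L‖₊ * ‖Q 1 - Q l‖ + 2 * ∑ j ∈ Icc (l + 1) n, m j * δ ^ (2 * a + 1) := by
  have h1 : 1 ∈ Icc 1 l := mem_Icc.mpr ⟨le_rfl, by omega⟩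
  have hl : l ∈ Icc 1 l := mem_Icc.mpr ⟨by omega, le_rfl⟩
  have hC : Icc 1 l ⊆ Icc 1 n := Icc_subset_Icc_right hln
  have hF : Icc (l + 1) n ⊆ Icc 1 n := Icc_subset_Icc_left (by omega)
  have hsplit : ∀ i ∈ Icc 1 l, L (Q i) =
      ∑ j ∈ Icc 1 l, pairForce m a Q i j + ∑ j ∈ Icc (l + 1) n, pairForce m a Q i j :=
    fun i hi => by
      rw [Finset.sum_Icc_consecutive _ (by omega) hln,
        ← Finset.sum_erase _ (pairForce_self m a Q i)]
      exact hcrit i (hC hi)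
  have hext : ∀ i ∈ Icc 1 l, ‖∑ j ∈ Icc (l + 1) n, pairForce m a Q i j‖ ≤
      ∑ j ∈ Icc (l + 1) n, m j * δ ^ (2 * a + 1) :=
    fun i hi => norm_sum_pairForce_le_of_le_norm m a Q _ (fun j hj => (hm j (hF hj)).le)
      ha hδ (hfar i hi)
  calc m l * ‖Q 1 - Q l‖ ^ (2 * a + 1)
      ≤ ‖∑ j ∈ Icc 1 l, pairForce m a Q 1 j‖ :=
        mul_rpow_le_norm_sum_pairForce m a Q _ (fun j hj => (hm j (hC hj)).le) hl hne
          fun j hj => hmax j hj l hl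
    _ ≤ _ :=
        norm_sum_pairForce_le_of_lipschitz m a Q _ (fun i hi => hm i (hC hi))
          L.lipschitz _ hsplit h1 (hmax 1 h1) hext

theorem no_collapsing_sequence_general {k n : ℕ} (A : Fin (k / 2) → ℝ)
    (m : ℕ → ℝ) (hm : ∀ i ∈ Finset.Icc 1 n, 0 < m i) (a : ℝ) (ha : a < -1/2)
    (l : ℕ) (hl2 : 2 ≤ l) (hln : l ≤ n)
    (Q : ℕ → ℕ → EuclideanSpace ℝ (Fin k))
    -- each configuration consists of pairwise distinct points
    (hdistinct : ∀ r, ∀ i ∈ Finset.Icc 1 n, ∀ j ∈ Finset.Icc 1 n, i ≠ j → Q r i ≠ Q r j)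
    -- each configuration satisfies the relative equilibrium criterion
    (hcrit : ∀ r, ∀ i ∈ Finset.Icc 1 n, mulVecE ((Amat k A) ^ 2) (Q r i) =
      ∑ j ∈ (Finset.Icc 1 n).erase i, (m j * ‖Q r i - Q r j‖ ^ (2 * a)) • (Q r i - Q r j))
    -- all mutual distances within the cluster `{1,...,l}` tend to `0`
    (hcollapse : ∀ i ∈ Finset.Icc 1 l, ∀ j ∈ Finset.Icc 1 l,
      Filter.Tendsto (fun r => ‖Q r i - Q r j‖) Filter.atTop (nhds 0))
    -- `‖Q_{1r} - Q_{lr}‖` is maximal among the cluster distances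
    (hmax : ∀ r, ∀ i ∈ Finset.Icc 1 l, ∀ j ∈ Finset.Icc 1 l,
      ‖Q r i - Q r j‖ ≤ ‖Q r 1 - Q r l‖)
    -- the distances to the remaining bodies stay bounded below
    (δ : ℝ) (hδ : 0 < δ)
    (hfar : ∀ r, ∀ i ∈ Finset.Icc 1 l, ∀ j ∈ Finset.Icc (l + 1) n, δ ≤ ‖Q r i - Q r j‖) :
    False := by
  have h1 : 1 ∈ Icc 1 l := mem_Icc.mpr ⟨le_rfl, by omega⟩
  have hl : l ∈ Icc 1 l := mem_Icc.mpr ⟨by omega, le_rfl⟩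
  have hC : Icc 1 l ⊆ Icc 1 n := Icc_subset_Icc_right hln
  have hne : ∀ r, Q r 1 ≠ Q r l := fun r => hdistinct r 1 (hC h1) l (hC hl) (by omega)
  have hτ : Tendsto (fun r => ‖Q r 1 - Q r l‖) atTop (𝓝[>] 0) :=
    tendsto_nhdsWithin_iff.mpr ⟨hcollapse 1 h1 l hl,
      Eventually.of_forall fun r => norm_pos_iff.mpr (sub_ne_zero.mpr (hne r))⟩
  exact not_forall_mul_rpow_le hτ (by linarith) (hm l (hC hl)) _ _ fun r =>
    mul_rpow_le_of_forall_eq_sum_pairForce (toEuclideanCLM (𝕜 := ℝ) (Amat k A ^ 2))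
      (by linarith) hl2 hln hm (hne r) (hcrit r) (hmax r) hδ (hfar r)

/-- the contradiction at the heart of the proof of the main theorem:
there is no sequence of relative equilibria in which a cluster of bodies `1,...,l`
collapses while staying uniformly away from the remaining bodies. -/
theorem no_collapsing_sequence {k n : ℕ} (A : Fin (k / 2) → ℝ) (hA : ∀ s, 0 < A s)
    (m : ℕ → ℝ) (hm : ∀ i ∈ Finset.Icc 1 n, 0 < m i) (a : ℝ) (ha : a < -1/2)
    (l : ℕ) (hl2 : 2 ≤ l) (hln : l ≤ n)
    (Q : ℕ → ℕ → EuclideanSpace ℝ (Fin k))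
    -- each configuration consists of pairwise distinct points
    (hdistinct : ∀ r, ∀ i ∈ Finset.Icc 1 n, ∀ j ∈ Finset.Icc 1 n, i ≠ j → Q r i ≠ Q r j)
    -- each configuration satisfies the relative equilibrium criterion
    (hcrit : ∀ r, ∀ i ∈ Finset.Icc 1 n, mulVecE ((Amat k A) ^ 2) (Q r i) =
      ∑ j ∈ (Finset.Icc 1 n).erase i, (m j * ‖Q r i - Q r j‖ ^ (2 * a)) • (Q r i - Q r j))
    -- all mutual distances within the cluster `{1,...,l}` tend to `0`
    (hcollapse : ∀ i ∈ Finset.Icc 1 l, ∀ j ∈ Finset.Icc 1 l,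
      Filter.Tendsto (fun r => ‖Q r i - Q r j‖) Filter.atTop (nhds 0))
    -- `‖Q_{1r} - Q_{lr}‖` is maximal among the cluster distances
    (hmax : ∀ r, ∀ i ∈ Finset.Icc 1 l, ∀ j ∈ Finset.Icc 1 l,
      ‖Q r i - Q r j‖ ≤ ‖Q r 1 - Q r l‖)
    -- the distances to the remaining bodies stay bounded below
    (δ : ℝ) (hδ : 0 < δ)
    (hfar : ∀ r, ∀ i ∈ Finset.Icc 1 l, ∀ j ∈ Finset.Icc (l + 1) n, δ ≤ ‖Q r i - Q r j‖) :
    False :=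
  no_collapsing_sequence_general A m hm a ha l hl2 hln Q hdistinct hcrit hcollapse hmax δ hδ hfar
end

section
/- For a < -1/2, c > 0, and fixed masses m₁,...,m_n > 0 and invertible diagonal 𝐀, the set of configurations (Q₁,...,Q_n) ∈ (ℝ^k)^n satisfying the relative equilibrium criterion and ‖Q_i - Q_j‖ ≥ c for all i ≠ j is closed and bounded, hence compact. -/
open Real Finset Matrix Filter

/-!
The criterion reads `A² Q_i = F_i(Q)` with `F_i(Q) = ∑_{j ≠ i} m_j ‖Q_i - Q_j‖^{2a} (Q_i - Q_j)`.
On `c`-separated configurations (a closed set) every `F_i` is continuous, as the distances stay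
away from `0`, so the equilibrium set is closed. There each term of `F_i` has norm
`m_j ‖Q_i - Q_j‖^{2a+1} ≤ m_j c^{2a+1}` because `2a + 1 < 0`, so `‖A² Q_i‖ ≤ (∑ m_j) c^{2a+1}`;
as `A²` is invertible, hence antilipschitz, every `Q_i` is bounded. Heine–Borel concludes.
-/

section Configurations

variable {ι E : Type*} [NormedAddCommGroup E]

def separatedConfigs (c : ℝ) : Set (ι → E) :=
  {Q | ∀ i j, i ≠ j → c ≤ ‖Q i - Q j‖}

theorem isClosed_separatedConfigs (c : ℝ) : IsClosed (separatedConfigs (ι := ι) (E := E) c) := by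
  simp only [separatedConfigs, Set.ofPred_forall]
  exact isClosed_iInter fun i => isClosed_iInter fun j => isClosed_iInter fun _ =>
    isClosed_le continuous_const ((continuous_apply i).sub (continuous_apply j)).norm

variable [Fintype ι] [DecidableEq ι] [NormedSpace ℝ E]

noncomputable def attraction (m : ι → ℝ) (a : ℝ) (Q : ι → E) (i : ι) : E :=
  ∑ j ∈ univ.filter (· ≠ i), (m j * ‖Q i - Q j‖ ^ (2 * a)) • (Q i - Q j)

def equilibria (L : E → E) (m : ι → ℝ) (a c : ℝ) : Set (ι → E) :=
  {Q | (∀ i, L (Q i) = attraction m a Q i) ∧ Q ∈ separatedConfigs c}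

variable {m : ι → ℝ} {a c : ℝ}

theorem continuousOn_attraction (hc : 0 < c) (i : ι) :
    ContinuousOn (fun Q => attraction m a Q i) (separatedConfigs (E := E) c) := by
  refine continuousOn_finsetSum _ fun j hj => ContinuousOn.smul ?_ ?_
  · refine continuousOn_const.mul (ContinuousOn.rpow_const ?_ fun Q hQ => Or.inl ?_)
    · exact ((continuous_apply i).sub (continuous_apply j)).norm.continuousOn
    · exact (hc.trans_le (hQ i j (mem_filter.mp hj).2.symm)).ne'
  · exact ((continuous_apply i).sub (continuous_apply j)).continuousOn

theorem isClosed_equilibria {L : E → E} (hL : Continuous L) (hc : 0 < c) :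
    IsClosed (equilibria L m a c) := by
  have hF : ContinuousOn (fun Q => (fun i => L (Q i), fun i => attraction m a Q i))
      (separatedConfigs (ι := ι) c) :=
    (continuous_pi fun i => hL.comp (continuous_apply i)).continuousOn.prodMk
      (continuousOn_pi.2 fun i => continuousOn_attraction hc i)
  convert hF.preimage_isClosed_of_isClosed (isClosed_separatedConfigs c) isClosed_diagonal using 1
  ext Q
  simp [equilibria, funext_iff, and_comm]

theorem norm_rpow_smul_le {x : E} {p : ℝ} (hc : 0 < c) (hx : c ≤ ‖x‖) (hp : p + 1 ≤ 0) :
    ‖(‖x‖ ^ p) • x‖ ≤ c ^ (p + 1) := by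
  rw [norm_smul, norm_of_nonneg (by positivity), ← rpow_add_one (hc.trans_le hx).ne']
  exact rpow_le_rpow_of_nonpos hc hx hp

theorem norm_attraction_le (hm : ∀ j, 0 ≤ m j) (hc : 0 < c) (ha : 2 * a + 1 ≤ 0)
    {Q : ι → E} (hQ : Q ∈ separatedConfigs c) (i : ι) :
    ‖attraction m a Q i‖ ≤ (∑ j, m j) * c ^ (2 * a + 1) := by
  calc ‖attraction m a Q i‖
      ≤ ∑ j ∈ univ.filter (· ≠ i), m j * ‖(‖Q i - Q j‖ ^ (2 * a)) • (Q i - Q j)‖ := by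
        refine (norm_sum_le _ _).trans_eq (sum_congr rfl fun j _ => ?_)
        rw [mul_smul, norm_smul, norm_of_nonneg (hm j)]
    _ ≤ ∑ j ∈ univ.filter (· ≠ i), m j * c ^ (2 * a + 1) :=
        sum_le_sum fun j hj => mul_le_mul_of_nonneg_left
          (norm_rpow_smul_le hc (hQ i j (mem_filter.mp hj).2.symm) ha) (hm j)
    _ ≤ ∑ j, m j * c ^ (2 * a + 1) :=
        sum_le_sum_of_subset_of_nonneg (filter_subset _ _) fun j _ _ =>
          mul_nonneg (hm j) (rpow_nonneg hc.le _)
    _ = (∑ j, m j) * c ^ (2 * a + 1) := (sum_mul _ _ _).symm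

theorem isBounded_equilibria {L : E → E} {K : NNReal} (hL : AntilipschitzWith K L)
    (hm : ∀ j, 0 ≤ m j) (hc : 0 < c) (ha : 2 * a + 1 ≤ 0) :
    Bornology.IsBounded (equilibria L m a c) := by
  refine (Bornology.IsBounded.pi fun _ : ι =>
    hL.isBounded_preimage
      (Metric.isBounded_closedBall (x := 0) (r := (∑ j, m j) * c ^ (2 * a + 1)))).subset fun Q hQ => ?_
  rw [Set.mem_univ_pi]
  intro i
  simpa [hQ.1 i] using norm_attraction_le hm hc ha hQ.2 i

end Configurations

section MatrixAction

variable {k : ℕ}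

theorem mulVecE_eq_toEuclideanCLM (M : Matrix (Fin k) (Fin k) ℝ) :
    mulVecE M = Matrix.toEuclideanCLM (𝕜 := ℝ) M :=
  rfl

theorem continuous_mulVecE (M : Matrix (Fin k) (Fin k) ℝ) : Continuous (mulVecE M) := by
  rw [mulVecE_eq_toEuclideanCLM]
  exact ContinuousLinearMap.continuous _

theorem exists_antilipschitzWith_mulVecE {M : Matrix (Fin k) (Fin k) ℝ} (hM : IsUnit M) :
    ∃ K, AntilipschitzWith K (mulVecE M) := by
  have hinj : Function.Injective (mulVecE M) := fun x y hxy =>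
    WithLp.ofLp_injective 2 (mulVec_injective_iff_isUnit.mpr hM (congrArg WithLp.ofLp hxy))
  rw [mulVecE_eq_toEuclideanCLM] at hinj ⊢
  obtain ⟨K, -, hK⟩ :=
    (Matrix.toEuclideanCLM (𝕜 := ℝ) M).toLinearMap.injective_iff_antilipschitz.mp hinj
  exact ⟨K, hK⟩

theorem isUnit_Amat (hk : Even k) {A : Fin (k / 2) → ℝ} (hA : ∀ s, A s ≠ 0) :
    IsUnit (Amat k A) := by
  refine isUnit_diagonal.mpr (Pi.isUnit_iff.mpr fun i => ?_)
  rw [dif_pos (Nat.div_lt_div_of_lt_of_dvd hk.two_dvd i.2)]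
  exact (hA _).isUnit

end MatrixAction

/-- the set of relative equilibrium configurations with mutual distances
at least `c` is closed, bounded, and compact. -/
theorem equilibria_set_compact {k n : ℕ} (hk : Even k) (A : Fin (k / 2) → ℝ)
    (hA : ∀ s, 0 < A s) (m : Fin n → ℝ) (hm : ∀ i, 0 < m i) (a c : ℝ)
    (ha : a < -1/2) (hc : 0 < c) :
    IsClosed {Q : Fin n → EuclideanSpace ℝ (Fin k) |
        (∀ i, mulVecE ((Amat k A) ^ 2) (Q i) =
          ∑ j ∈ Finset.univ.filter (· ≠ i), (m j * ‖Q i - Q j‖ ^ (2 * a)) • (Q i - Q j)) ∧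
        ∀ i j, i ≠ j → c ≤ ‖Q i - Q j‖} ∧
    Bornology.IsBounded {Q : Fin n → EuclideanSpace ℝ (Fin k) |
        (∀ i, mulVecE ((Amat k A) ^ 2) (Q i) =
          ∑ j ∈ Finset.univ.filter (· ≠ i), (m j * ‖Q i - Q j‖ ^ (2 * a)) • (Q i - Q j)) ∧
        ∀ i j, i ≠ j → c ≤ ‖Q i - Q j‖} ∧
    IsCompact {Q : Fin n → EuclideanSpace ℝ (Fin k) |
        (∀ i, mulVecE ((Amat k A) ^ 2) (Q i) =
          ∑ j ∈ Finset.univ.filter (· ≠ i), (m j * ‖Q i - Q j‖ ^ (2 * a)) • (Q i - Q j)) ∧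
        ∀ i j, i ≠ j → c ≤ ‖Q i - Q j‖} := by
  obtain ⟨K, hK⟩ := exists_antilipschitzWith_mulVecE ((isUnit_Amat hk fun s => (hA s).ne').pow 2)
  have hclosed : IsClosed (equilibria (mulVecE (Amat k A ^ 2)) m a c) :=
    isClosed_equilibria (continuous_mulVecE _) hc
  have hbounded : Bornology.IsBounded (equilibria (mulVecE (Amat k A ^ 2)) m a c) :=
    isBounded_equilibria hK (fun j => (hm j).le) hc (by linarith)
  exact ⟨hclosed, hbounded, Metric.isCompact_of_isClosed_isBounded hclosed hbounded⟩
end
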